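/- arXiv:2309.06428 — 3 statements merged into one kernel-verified Lean document; each statement's English description precedes it below -/
import Mathlib

section
/- For a random variable X with continuous cumulative distribution function F₁ and finite second moment, the Gini mean difference E|X - X'| (where X' is an independent copy of X) equals 4·Cov(X, F₁(X)). -/
open MeasureTheory ProbabilityTheory

open Set

section Aux

set_option linter.unusedSectionVars false


variable {μ : Measure ℝ} [IsProbabilityMeasure μ]

lemma noatom (hcont : Continuous fun x => (μ (Iic x)).toReal) (a : ℝ) : μ {a} = 0 := by
  have hfin : ∀ s : Set ℝ, μ s ≠ ⊤ := fun s => measure_ne_top μ s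
  have key : ∀ ε : ℝ, 0 < ε → (μ {a}).toReal < ε := by
    intro ε hε
    obtain ⟨δ, hδ, hb⟩ := Metric.continuousAt_iff.mp (hcont.continuousAt (x := a)) ε hε
    have h1 : dist (a - δ/2) a < δ := by
      rw [Real.dist_eq]; rw [abs_of_nonpos] <;> [skip; linarith]; linarith
    have h2 := hb h1
    rw [Real.dist_eq, abs_lt] at h2
    have hsub : {a} ⊆ Ioc (a - δ/2) a := by
      intro x hx; rw [mem_singleton_iff] at hx; subst hx; constructor <;> [linarith; rfl]
    have hmono : μ {a} ≤ μ (Ioc (a - δ/2) a) := measure_mono hsub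
    have hioc : (μ (Ioc (a - δ/2) a)).toReal
        = (μ (Iic a)).toReal - (μ (Iic (a - δ/2))).toReal := by
      have : Iic a = Iic (a - δ/2) ∪ Ioc (a - δ/2) a := by
        rw [Iic_union_Ioc_eq_Iic]; linarith
      rw [this, measure_union (by exact Iic_disjoint_Ioc le_rfl) measurableSet_Ioc,
        ENNReal.toReal_add (hfin _) (hfin _)]
      ring
    calc (μ {a}).toReal ≤ (μ (Ioc (a - δ/2) a)).toReal :=
          ENNReal.toReal_mono (hfin _) hmono
      _ < ε := by rw [hioc]; linarith
  have : (μ {a}).toReal = 0 := by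
    by_contra h
    have h0 : 0 < (μ {a}).toReal := lt_of_le_of_ne ENNReal.toReal_nonneg (Ne.symm h)
    exact absurd (key _ h0) (lt_irrefl _)
  rwa [ENNReal.toReal_eq_zero_iff, or_iff_left (hfin _)] at this

lemma diag_null (h : ∀ a : ℝ, μ {a} = 0) : (μ.prod μ) {p : ℝ × ℝ | p.1 = p.2} = 0 := by
  have hm : MeasurableSet {p : ℝ × ℝ | p.1 = p.2} :=
    measurableSet_eq_fun measurable_fst measurable_snd
  rw [Measure.prod_apply hm]
  have : ∀ x : ℝ, μ (Prod.mk x ⁻¹' {p : ℝ × ℝ | p.1 = p.2}) = 0 := by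
    intro x
    have : Prod.mk x ⁻¹' {p : ℝ × ℝ | p.1 = p.2} = {x} := by
      ext y; simp [eq_comm]
    rw [this]; exact h x
  simp only [this, lintegral_zero]

lemma iio_eq (h : ∀ a : ℝ, μ {a} = 0) (x : ℝ) : μ (Iio x) = μ (Iic x) := by
  apply le_antisymm (measure_mono Iio_subset_Iic_self)
  calc μ (Iic x) = μ (Iio x ∪ {x}) := by rw [Iio_union_right]
    _ ≤ μ (Iio x) + μ {x} := measure_union_le _ _
    _ = μ (Iio x) := by rw [h x, add_zero]

lemma half_int {F : ℝ → ℝ} (hF : ∀ x, F x = (μ (Iic x)).toReal)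
    (h : ∀ a : ℝ, μ {a} = 0) : ∫ x, F x ∂μ = 1/2 := by
  set S : Set (ℝ × ℝ) := {p : ℝ × ℝ | p.2 ≤ p.1} with hS
  set T : Set (ℝ × ℝ) := {p : ℝ × ℝ | p.1 ≤ p.2} with hT
  have hSm : MeasurableSet S := measurableSet_le measurable_snd measurable_fst
  have hTm : MeasurableSet T := measurableSet_le measurable_fst measurable_snd
  have hST : (μ.prod μ) S = (μ.prod μ) T := by
    have := Measure.prod_swap (μ := μ) (ν := μ)
    calc (μ.prod μ) S = (Measure.map Prod.swap (μ.prod μ)) S := by rw [this]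
      _ = (μ.prod μ) (Prod.swap ⁻¹' S) := Measure.map_apply measurable_swap hSm
      _ = (μ.prod μ) T := by
          have hpre : Prod.swap ⁻¹' S = T := by ext p; simp [hS, hT]
          rw [hpre]
  have hunion : S ∪ T = univ := by
    ext p; simp [hS, hT, le_total]
  have hinter : S ∩ T = {p : ℝ × ℝ | p.1 = p.2} := by
    ext p; simp only [hS, hT, mem_inter_iff, mem_setOf_eq]
    constructor
    · rintro ⟨h1, h2⟩; exact le_antisymm h2 h1
    · rintro h1; exact ⟨h1.ge, h1.le⟩
  have hsum : (μ.prod μ) S + (μ.prod μ) T = 1 := by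
    have := measure_union_add_inter (μ := μ.prod μ) S hTm
    rw [hunion, hinter, diag_null h, measure_univ, add_zero] at this
    exact this.symm
  have hhalf : ((μ.prod μ) S).toReal = 1/2 := by
    have hfin : ∀ s : Set (ℝ × ℝ), (μ.prod μ) s ≠ ⊤ := fun s => measure_ne_top _ s
    have := congrArg ENNReal.toReal hsum
    rw [ENNReal.toReal_add (hfin _) (hfin _), hST] at this
    simp only [ENNReal.toReal_one] at this
    rw [hST]; linarith
  have hmeas : Measurable fun x : ℝ => μ (Iic x) := by
    have h1 := measurable_measure_prodMk_left (ν := μ) hSm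
    have h2 : (fun x : ℝ => μ (Prod.mk x ⁻¹' S)) = fun x => μ (Iic x) := by
      funext x; congr 1
    rwa [h2] at h1
  have hFi : ∫ x, F x ∂μ = (∫⁻ x, μ (Iic x) ∂μ).toReal := by
    rw [show (fun x => F x) = fun x => (μ (Iic x)).toReal from funext hF]
    rw [integral_toReal hmeas.aemeasurable]
    filter_upwards with x
    exact lt_of_le_of_lt prob_le_one (by norm_num)
  have hprodS : (μ.prod μ) S = ∫⁻ x, μ (Iic x) ∂μ := by
    rw [Measure.prod_apply hSm]
    apply lintegral_congr; intro x; congr 1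
  rw [hFi, ← hprodS, hhalf]

lemma main_int {F : ℝ → ℝ} (hF : ∀ x, F x = (μ (Iic x)).toReal) (hcont : Continuous F)
    (h0 : ∀ a : ℝ, μ {a} = 0) (hint : Integrable (fun x => x) μ) :
    ∫ p : ℝ × ℝ, |p.1 - p.2| ∂(μ.prod μ)
      = 4 * (∫ x, x * F x ∂μ) - 2 * (∫ x, x ∂μ) := by
  set S : Set (ℝ × ℝ) := {p : ℝ × ℝ | p.2 < p.1} with hSdef
  have hSm : MeasurableSet S := measurableSet_lt measurable_snd measurable_fst
  set g : ℝ × ℝ → ℝ := S.indicator (fun p => p.1 - p.2) with hgdef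
  set A : ℝ × ℝ → ℝ := S.indicator (fun p => p.1) with hAdef
  set B : ℝ × ℝ → ℝ := S.indicator (fun p => p.2) with hBdef
  have hF1 : ∀ x, F x ≤ 1 := by
    intro x; rw [hF x]
    exact (ENNReal.toReal_mono (measure_ne_top μ univ)
      (measure_mono (subset_univ _))).trans_eq (by simp)
  have hF0 : ∀ x, 0 ≤ F x := fun x => (hF x) ▸ ENNReal.toReal_nonneg
  have h1 : Integrable (fun p : ℝ × ℝ => p.1) (μ.prod μ) := by
    have h : Integrable (fun z : ℝ × ℝ => z.1 * 1) (μ.prod μ) :=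
      hint.mul_prod (integrable_const 1)
    simpa using h
  have h2 : Integrable (fun p : ℝ × ℝ => p.2) (μ.prod μ) := by
    have h : Integrable (fun z : ℝ × ℝ => (1:ℝ) * z.2) (μ.prod μ) :=
      (integrable_const 1).mul_prod hint
    simpa using h
  have hAi : Integrable A (μ.prod μ) :=
    h1.mono ((measurable_fst.indicator hSm).aestronglyMeasurable)
      (Filter.Eventually.of_forall fun p => norm_indicator_le_norm_self _ p)
  have hBi : Integrable B (μ.prod μ) :=
    h2.mono ((measurable_snd.indicator hSm).aestronglyMeasurable)
      (Filter.Eventually.of_forall fun p => norm_indicator_le_norm_self _ p)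
  have hgi : Integrable g (μ.prod μ) :=
    (h1.sub h2).mono (((measurable_fst.sub measurable_snd).indicator hSm).aestronglyMeasurable)
      (Filter.Eventually.of_forall fun p => norm_indicator_le_norm_self _ p)
  have hdecomp : ∀ p : ℝ × ℝ, |p.1 - p.2| = g p + g p.swap := by
    intro p
    simp only [hgdef, Set.indicator_apply, hSdef, mem_setOf_eq, Prod.fst_swap, Prod.snd_swap]
    rcases lt_trichotomy p.2 p.1 with hlt | heq | hgt
    · rw [if_pos hlt, if_neg (not_lt.mpr hlt.le), abs_of_pos (by linarith)]; ring
    · rw [if_neg (not_lt.mpr heq.ge), if_neg (not_lt.mpr heq.le)]; simp [heq]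
    · rw [if_neg (not_lt.mpr hgt.le), if_pos hgt, abs_of_neg (by linarith)]; ring
  have hswapint : ∫ p : ℝ × ℝ, g p.swap ∂(μ.prod μ) = ∫ p, g p ∂(μ.prod μ) :=
    integral_prod_swap (μ := μ) (ν := μ) g
  have hI : ∫ p : ℝ × ℝ, |p.1 - p.2| ∂(μ.prod μ) = 2 * ∫ p, g p ∂(μ.prod μ) := by
    have hgswapi : Integrable (fun p : ℝ × ℝ => g p.swap) (μ.prod μ) := hgi.swap
    rw [show (fun p : ℝ × ℝ => |p.1 - p.2|) = fun p => g p + g p.swap from funext hdecomp]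
    rw [integral_add hgi hgswapi, hswapint]; ring
  have hgAB : g = fun p => A p - B p := by
    funext p
    simp only [hgdef, hAdef, hBdef, Set.indicator_apply]
    split <;> simp
  have hgint : ∫ p, g p ∂(μ.prod μ) = ∫ p, A p ∂(μ.prod μ) - ∫ p, B p ∂(μ.prod μ) := by
    rw [hgAB, integral_sub hAi hBi]
  have hAcalc : ∫ p, A p ∂(μ.prod μ) = ∫ x, x * F x ∂μ := by
    rw [integral_prod _ hAi]
    apply integral_congr_ae (Filter.Eventually.of_forall ?_)
    intro x
    have hx : (fun y => A (x, y)) = (Iio x).indicator (fun _ => x) := by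
      funext y
      simp only [hAdef, Set.indicator_apply, hSdef, mem_setOf_eq, mem_Iio]
    rw [hx, integral_indicator measurableSet_Iio, setIntegral_const, smul_eq_mul,
      measureReal_def, iio_eq h0, ← hF x, mul_comm]
  have hIoi : ∀ x : ℝ, (μ (Ioi x)).toReal = 1 - F x := by
    intro x
    have hu := measure_union (Iic_disjoint_Ioi (le_refl x)) measurableSet_Ioi (μ := μ)
    rw [Iic_union_Ioi, measure_univ] at hu
    have := congrArg ENNReal.toReal hu
    rw [ENNReal.toReal_one, ENNReal.toReal_add (measure_ne_top μ _) (measure_ne_top μ _)] at this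
    rw [hF x]; linarith
  have hxF : Integrable (fun x => x * F x) μ := by
    refine hint.mono ((measurable_id.mul hcont.measurable).aestronglyMeasurable) ?_
    filter_upwards with x
    rw [Real.norm_eq_abs, Real.norm_eq_abs, abs_mul]
    calc |x| * |F x| ≤ |x| * 1 := by
          apply mul_le_mul_of_nonneg_left _ (abs_nonneg x)
          rw [abs_of_nonneg (hF0 x)]; exact hF1 x
      _ = |x| := mul_one _
  have hBcalc : ∫ p, B p ∂(μ.prod μ) = (∫ x, x ∂μ) - ∫ x, x * F x ∂μ := by
    have hBsi : Integrable (fun p : ℝ × ℝ => B p.swap) (μ.prod μ) := hBi.swap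
    rw [← integral_prod_swap (μ := μ) (ν := μ) B,
      integral_prod (fun p : ℝ × ℝ => B p.swap) hBsi]
    have hinner : ∀ x : ℝ, ∫ y, B (Prod.swap (x, y)) ∂μ = x * (1 - F x) := by
      intro x
      have hx : (fun y => B (Prod.swap (x, y))) = (Ioi x).indicator (fun _ => x) := by
        funext y
        simp only [hBdef, Set.indicator_apply, hSdef, mem_setOf_eq, mem_Ioi, Prod.swap]
      rw [hx, integral_indicator measurableSet_Ioi, setIntegral_const, smul_eq_mul,
        measureReal_def, hIoi x, mul_comm]
    rw [show (fun x => ∫ y, B (Prod.swap (x, y)) ∂μ) = fun x => x * (1 - F x) from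
      funext hinner]
    rw [show (fun x : ℝ => x * (1 - F x)) = fun x => x - x * F x from by funext x; ring]
    rw [integral_sub hint hxF]
  rw [hI, hgint, hAcalc, hBcalc]; ring


end Aux

/-- For a random variable `X` with continuous cdf `F₁` and finite second moment, the Gini
mean difference `E|X - X'|` (with `X'` an independent copy of `X`) equals `4·Cov(X, F₁(X))`. -/
theorem stmt_0 {Ω : Type*} [MeasureSpace Ω] [IsProbabilityMeasure (ℙ : Measure Ω)]
    (X X' : Ω → ℝ) (F₁ : ℝ → ℝ)
    (hmX : Measurable X) (hmX' : Measurable X')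
    (hcdf : ∀ x, F₁ x = (ℙ {ω | X ω ≤ x}).toReal)
    (hcont : Continuous F₁)
    (hindep : IndepFun X X' ℙ)
    (hid : Measure.map X ℙ = Measure.map X' ℙ)
    (hL2 : MemLp X 2 ℙ) :
    (∫ ω, |X ω - X' ω|) =
      4 * ((∫ ω, X ω * F₁ (X ω)) - (∫ ω, X ω) * (∫ ω, F₁ (X ω))) := by
  set μ : Measure ℝ := Measure.map X ℙ with hμ
  have hpm : IsProbabilityMeasure μ := Measure.isProbabilityMeasure_map hmX.aemeasurable
  have hFμ : ∀ x, F₁ x = (μ (Iic x)).toReal := by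
    intro x
    rw [hcdf x, hμ, Measure.map_apply hmX measurableSet_Iic]
    rfl
  have hcont' : Continuous fun x => (μ (Iic x)).toReal := by
    have : (fun x => (μ (Iic x)).toReal) = F₁ := by funext x; rw [hFμ x]
    rw [this]; exact hcont
  have h0 : ∀ a : ℝ, μ {a} = 0 := noatom hcont'
  have hXint : Integrable X ℙ := hL2.integrable one_le_two
  have hint : Integrable (fun x => x) μ := by
    have hasm : AEStronglyMeasurable (fun x : ℝ => x) (Measure.map X ℙ) :=
      measurable_id'.aestronglyMeasurable
    rw [hμ, integrable_map_measure hasm hmX.aemeasurable]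
    exact hXint
  -- joint law
  have hjoint : Measure.map (fun ω => (X ω, X' ω)) ℙ = μ.prod μ := by
    rw [(indepFun_iff_map_prod_eq_prod_map_map hmX.aemeasurable hmX'.aemeasurable).mp hindep,
      ← hid]
  -- transfer integrals
  have e1 : (∫ ω, |X ω - X' ω|) = ∫ p : ℝ × ℝ, |p.1 - p.2| ∂(μ.prod μ) := by
    rw [← hjoint, integral_map (f := fun p : ℝ × ℝ => |p.1 - p.2|) (hmX.prodMk hmX').aemeasurable
      ((continuous_fst.sub continuous_snd).abs.aestronglyMeasurable :
        AEStronglyMeasurable (fun p : ℝ × ℝ => |p.1 - p.2|) _)]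
  have e2 : (∫ ω, X ω) = ∫ x, x ∂μ := by
    have hasm : AEStronglyMeasurable (fun x : ℝ => x) (Measure.map X ℙ) :=
      measurable_id'.aestronglyMeasurable
    rw [hμ]
    exact (integral_map hmX.aemeasurable hasm).symm
  have e3 : (∫ ω, X ω * F₁ (X ω)) = ∫ x, x * F₁ x ∂μ := by
    have hasm : AEStronglyMeasurable (fun x : ℝ => x * F₁ x) (Measure.map X ℙ) :=
      (measurable_id'.mul hcont.measurable).aestronglyMeasurable
    rw [hμ]
    exact (integral_map hmX.aemeasurable hasm).symm
  have e4 : (∫ ω, F₁ (X ω)) = ∫ x, F₁ x ∂μ := by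
    rw [hμ]
    exact (integral_map hmX.aemeasurable
      (hcont.measurable.aestronglyMeasurable (μ := Measure.map X ℙ))).symm
  rw [e1, e2, e3, e4, main_int hFμ hcont h0 hint, half_int hFμ h0]
  ring
end

section
/- Suppose ζ > 1, E|X⁻|^ζ < ∞, and F₂(Y) is uniform on (0,1). Then for every p ∈ (0,1), |Cov(X⁻, F₂(Y) | F₂(Y) > 1-p)| ≤ (2/p) (E|X⁻|^ζ)^{1/ζ} (P(X < 0, 1-F₂(Y) < p))^{1-1/ζ}. -/
/-!
Conditionally on `A = {F₂(Y) > 1 - p}`, an event of probability `p`, the factor `F₂(Y)` lies in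
`[0, 1]`, so the conditional covariance is at most `2 E[|X⁻| | A] = (2 / p) E[|X⁻|; A]`. As `X⁻`
vanishes off `{X < 0}`, the last expectation is over `B = A ∩ {X < 0}`, and Hölder's inequality
with exponents `ζ` and `ζ / (ζ - 1)` applied to `|X⁻| · 1_B` gives the bound.
-/

open MeasureTheory ProbabilityTheory Set

section

variable {α : Type*} [MeasurableSpace α] {μ : Measure α}

theorem abs_integral_mul_sub_integral_mul_integral_le [IsProbabilityMeasure μ] {f g : α → ℝ}
    (hf : Integrable f μ) (hg : ∀ᵐ x ∂μ, |g x| ≤ 1) :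
    |∫ x, f x * g x ∂μ - (∫ x, f x ∂μ) * ∫ x, g x ∂μ| ≤ 2 * ∫ x, |f x| ∂μ := by
  have hfg : |∫ x, f x * g x ∂μ| ≤ ∫ x, |f x| ∂μ :=
    norm_integral_le_of_norm_le (f := fun x => f x * g x) hf.abs <| hg.mono fun x hx => by
      simpa [abs_mul] using mul_le_of_le_one_right (abs_nonneg (f x)) hx
  have hf' : |∫ x, f x ∂μ| ≤ ∫ x, |f x| ∂μ := abs_integral_le_integral_abs
  have hg' : |∫ x, g x ∂μ| ≤ 1 := by
    simpa using norm_integral_le_of_norm_le (f := g) (integrable_const (1 : ℝ)) hg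
  calc |∫ x, f x * g x ∂μ - (∫ x, f x ∂μ) * ∫ x, g x ∂μ|
      ≤ |∫ x, f x * g x ∂μ| + |∫ x, f x ∂μ| * |∫ x, g x ∂μ| := by
        rw [← abs_mul]; exact abs_sub _ _
    _ ≤ ∫ x, |f x| ∂μ + (∫ x, |f x| ∂μ) * 1 := by
        gcongr
    _ = 2 * ∫ x, |f x| ∂μ := by ring

theorem memLp_ofReal_of_integrable_abs_rpow {f : α → ℝ} (hf : AEStronglyMeasurable f μ) {r : ℝ}
    (hr : 0 < r) (h : Integrable (fun x => |f x| ^ r) μ) : MemLp f (ENNReal.ofReal r) μ := by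
  rw [← integrable_norm_rpow_iff hf (by simpa using hr) ENNReal.ofReal_ne_top]
  simpa [ENNReal.toReal_ofReal hr.le] using h

theorem setIntegral_abs_le_of_memLp [IsFiniteMeasure μ] {f : α → ℝ} {r : ℝ} (hr : 1 < r)
    (hf : MemLp f (ENNReal.ofReal r) μ) (s : Set α) :
    ∫ x in s, |f x| ∂μ ≤ (∫ x, |f x| ^ r ∂μ) ^ (1 / r) * μ.real s ^ (1 - 1 / r) := by
  have hconj : r.HolderConjugate r.conjExponent := .conjExponent hr
  have hholder := integral_mul_le_Lp_mul_Lq_of_nonneg hconj (μ := μ.restrict s)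
    (f := fun x => |f x|) (g := fun _ => (1 : ℝ)) (.of_forall fun x => abs_nonneg (f x))
    (.of_forall fun _ => zero_le_one) (hf.restrict s).abs (memLp_const 1)
  have hint : Integrable (fun x => |f x| ^ r) μ := by
    simpa [ENNReal.toReal_ofReal (by linarith : 0 ≤ r)] using
      hf.integrable_norm_rpow (by simp; linarith) ENNReal.ofReal_ne_top
  have hrestrict : ∫ x in s, |f x| ^ r ∂μ ≤ ∫ x, |f x| ^ r ∂μ :=
    setIntegral_le_integral hint (.of_forall fun x => by positivity)
  simp only [mul_one, Real.one_rpow, integral_const, smul_eq_mul,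
    measureReal_restrict_apply_univ] at hholder
  rw [one_div r.conjExponent, ← hconj.one_sub_inv, ← one_div] at hholder
  calc ∫ x in s, |f x| ∂μ ≤ _ := hholder
    _ ≤ _ := by gcongr

theorem integral_cond_eq_inv_mul_setIntegral (s : Set α) (f : α → ℝ) :
    ∫ x, f x ∂μ[|s] = (μ.real s)⁻¹ * ∫ x in s, f x ∂μ := by
  rw [ProbabilityTheory.cond, integral_smul_measure, ENNReal.toReal_inv, smul_eq_mul,
    measureReal_def]

theorem MeasureTheory.Integrable.cond {f : α → ℝ} (hf : Integrable f μ) (s : Set α) :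
    Integrable f μ[|s] := by
  by_cases hs : μ s = 0
  · simp [cond_eq_zero_of_meas_eq_zero hs]
  · exact hf.restrict.smul_measure (by simpa using hs)

theorem ae_mem_of_map_eq_restrict {β : Type*} [MeasurableSpace β] {ν : Measure β} {U : α → β}
    {s : Set β} (hU : AEMeasurable U μ) (hmap : μ.map U = ν.restrict s) (hs : MeasurableSet s) :
    ∀ᵐ x ∂μ, U x ∈ s :=
  ae_of_ae_map hU (hmap ▸ ae_restrict_mem hs)

theorem measure_setOf_lt_eq_of_map_eq_restrict_Ioo {U : α → ℝ} (hU : AEMeasurable U μ)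
    (hmap : μ.map U = volume.restrict (Ioo 0 1)) {t : ℝ} (ht : 0 ≤ t) :
    μ {x | t < U x} = ENNReal.ofReal (1 - t) := by
  change μ (U ⁻¹' Ioi t) = _
  rw [← Measure.map_apply_of_aemeasurable hU measurableSet_Ioi, hmap,
    Measure.restrict_apply measurableSet_Ioi, Ioi_inter_Ioo, max_eq_left ht, Real.volume_Ioo]

end

/-- Hölder bound for the conditional covariance of the negative part `X⁻ = min(X,0)`
with `F₂(Y)` given `{F₂(Y) > 1-p}`. -/
theorem stmt_5 {Ω : Type*} [MeasureSpace Ω] [IsProbabilityMeasure (ℙ : Measure Ω)]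
    (X Y : Ω → ℝ) (hmX : Measurable X) (hmY : Measurable Y)
    (F₂ : ℝ → ℝ) (hmF₂ : Measurable F₂)
    (huni : Measure.map (fun ω => F₂ (Y ω)) ℙ = volume.restrict (Set.Ioo (0:ℝ) 1))
    (ζ : ℝ) (hζ : 1 < ζ)
    (hmom : Integrable (fun ω => |min (X ω) 0| ^ ζ) ℙ)
    (p : ℝ) (hp : p ∈ Set.Ioo (0:ℝ) 1) :
    |(∫ ω, min (X ω) 0 * F₂ (Y ω) ∂(ℙ[|{ω | 1 - p < F₂ (Y ω)}])) -
        (∫ ω, min (X ω) 0 ∂(ℙ[|{ω | 1 - p < F₂ (Y ω)}])) *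
          (∫ ω, F₂ (Y ω) ∂(ℙ[|{ω | 1 - p < F₂ (Y ω)}]))| ≤
      (2 / p) * (∫ ω, |min (X ω) 0| ^ ζ ∂ℙ) ^ (1/ζ) *
        ((ℙ {ω | X ω < 0 ∧ 1 - F₂ (Y ω) < p}).toReal) ^ (1 - 1/ζ) := by
  obtain ⟨hp0, hp1⟩ := hp
  set A := {ω | 1 - p < F₂ (Y ω)}
  have hU : Measurable fun ω => F₂ (Y ω) := hmF₂.comp hmY
  have hPA : ℙ A = ENNReal.ofReal p := by
    simpa using measure_setOf_lt_eq_of_map_eq_restrict_Ioo hU.aemeasurable huni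
      (sub_nonneg.2 hp1.le)
  have := cond_isProbabilityMeasure (show ℙ A ≠ 0 by simpa [hPA] using hp0)
  have hf : MemLp (fun ω => min (X ω) 0) (ENNReal.ofReal ζ) ℙ :=
    memLp_ofReal_of_integrable_abs_rpow (hmX.min measurable_const).aestronglyMeasurable
      (by linarith) hmom
  have hU_mem : ∀ᵐ ω ∂ℙ[|A], F₂ (Y ω) ∈ Ioo 0 1 := cond_absolutelyContinuous.ae_le
    (ae_mem_of_map_eq_restrict hU.aemeasurable huni measurableSet_Ioo)
  have hU_cond : ∀ᵐ ω ∂ℙ[|A], |F₂ (Y ω)| ≤ 1 :=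
    hU_mem.mono fun ω h => abs_le.2 ⟨by linarith [h.1], h.2.le⟩
  have hA : ∫ ω in A, |min (X ω) 0| ∂ℙ =
      ∫ ω in {ω | X ω < 0 ∧ 1 - F₂ (Y ω) < p}, |min (X ω) 0| ∂ℙ := by
    have hmA : MeasurableSet A := measurableSet_lt measurable_const hU
    refine setIntegral_eq_of_subset_of_forall_sdiff_eq_zero
      (f := fun ω => |min (X ω) 0|) hmA ?_ ?_
    · rintro ω ⟨-, h⟩
      exact sub_lt_comm.1 h
    · rintro ω ⟨hωA, hωB⟩
      have hX : 0 ≤ X ω := not_lt.1 fun hX => hωB ⟨hX, sub_lt_comm.1 hωA⟩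
      simp [hX]
  calc _ ≤ 2 * ∫ ω, |min (X ω) 0| ∂ℙ[|A] :=
        abs_integral_mul_sub_integral_mul_integral_le
          ((hf.integrable (by simp; linarith)).cond A) hU_cond
    _ = 2 / p * ∫ ω in {ω | X ω < 0 ∧ 1 - F₂ (Y ω) < p}, |min (X ω) 0| ∂ℙ := by
        rw [integral_cond_eq_inv_mul_setIntegral, hA, measureReal_def, hPA,
          ENNReal.toReal_ofReal hp0.le]
        ring
    _ ≤ _ := by
        rw [mul_assoc]
        gcongr
        exact setIntegral_abs_le_of_memLp hζ hf _
end

section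
/- Let X⁻ = min(X,0) satisfy E|X⁻|^ζ < ∞ for some ζ > 1 and suppose F₂(Y) is uniform on (0,1). If P(X < 0, 1-F₂(Y) < p) = O(p^{1/η + ξ - β₂}) as p → 0 for constants η ∈ (0,1], ξ > 0, β₂ ≥ 0, then Cov(X⁻, F₂(Y) | F₂(Y) > 1-p) = O(p^{(1/η + ξ - β₂)(1 - 1/ζ) - 1}) as p → 0. -/
open MeasureTheory ProbabilityTheory Filter Asymptotics

/-- If `P(X < 0, 1-F₂(Y) < p) = O(p^{1/η+ξ-β₂})` as `p → 0⁺` and `E|X⁻|^ζ < ∞`, then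
`Cov(X⁻, F₂(Y) | F₂(Y) > 1-p) = O(p^{(1/η+ξ-β₂)(1-1/ζ)-1})` as `p → 0⁺`. -/
theorem stmt_6 {Ω : Type*} [MeasureSpace Ω] [IsProbabilityMeasure (ℙ : Measure Ω)]
    (X Y : Ω → ℝ) (hmX : Measurable X) (hmY : Measurable Y)
    (F₂ : ℝ → ℝ) (hmF₂ : Measurable F₂)
    (huni : Measure.map (fun ω => F₂ (Y ω)) ℙ = volume.restrict (Set.Ioo (0:ℝ) 1))
    (ζ : ℝ) (hζ : 1 < ζ)
    (hmom : Integrable (fun ω => |min (X ω) 0| ^ ζ) ℙ)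
    (η ξ β₂ : ℝ) (hη : η ∈ Set.Ioc (0:ℝ) 1) (hξ : 0 < ξ) (hβ : 0 ≤ β₂)
    (hP : (fun p : ℝ => (ℙ {ω | X ω < 0 ∧ 1 - F₂ (Y ω) < p}).toReal)
        =O[nhdsWithin 0 (Set.Ioi 0)] fun p => p ^ (1/η + ξ - β₂)) :
    (fun p : ℝ =>
        (∫ ω, min (X ω) 0 * F₂ (Y ω) ∂(ℙ[|{ω | 1 - p < F₂ (Y ω)}])) -
          (∫ ω, min (X ω) 0 ∂(ℙ[|{ω | 1 - p < F₂ (Y ω)}])) *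
            (∫ ω, F₂ (Y ω) ∂(ℙ[|{ω | 1 - p < F₂ (Y ω)}])))
      =O[nhdsWithin 0 (Set.Ioi 0)] fun p => p ^ ((1/η + ξ - β₂) * (1 - 1/ζ) - 1) := by
  set α : ℝ := 1/η + ξ - β₂ with hαdef
  have hζ0 : (0:ℝ) < ζ := lt_trans one_pos hζ
  set f : Ω → ℝ := fun ω => min (X ω) 0 with hfdef
  set g : Ω → ℝ := fun ω => F₂ (Y ω) with hgdef
  have hmf : Measurable f := hmX.min measurable_const
  have hmg : Measurable g := hmF₂.comp hmY
  -- conjugate exponent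
  have hconj : ζ.HolderConjugate (ζ / (ζ - 1)) := by
    exact (Real.holderConjugate_iff_eq_conjExponent hζ).mpr rfl
  have hq : 1 / (ζ / (ζ - 1)) = 1 - 1/ζ := by
    rw [one_div_div]
    field_simp
  have hexp_nonneg : (0:ℝ) ≤ 1 - 1/ζ := by
    have : 1/ζ ≤ 1 := by
      rw [div_le_one hζ0]; exact hζ.le
    linarith
  -- g ∈ (0,1) a.e.
  have hgae : ∀ᵐ ω ∂(ℙ : Measure Ω), g ω ∈ Set.Ioo (0:ℝ) 1 := by
    rw [ae_iff]
    have : {ω | ¬ g ω ∈ Set.Ioo (0:ℝ) 1} = g ⁻¹' (Set.Ioo (0:ℝ) 1)ᶜ := rfl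
    rw [this, ← Measure.map_apply hmg measurableSet_Ioo.compl, huni,
      Measure.restrict_apply measurableSet_Ioo.compl]
    simp
  -- integrability of f
  have hf_int : Integrable f ℙ := by
    refine Integrable.mono' (hmom.add (integrable_const 1)) hmf.aestronglyMeasurable
      (ae_of_all _ fun ω => ?_)
    rw [Real.norm_eq_abs]
    simp only [Pi.add_apply]
    rcases le_or_gt (|f ω|) 1 with h | h
    · have : (0:ℝ) ≤ |f ω| ^ ζ := Real.rpow_nonneg (abs_nonneg _) _
      simp only [hfdef] at this h ⊢
      linarith
    · have h2 : |f ω| ^ (1:ℝ) ≤ |f ω| ^ ζ :=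
        Real.rpow_le_rpow_of_exponent_le h.le hζ.le
      rw [Real.rpow_one] at h2
      simp only [hfdef] at h2 ⊢
      linarith
  -- nonneg moments
  set M : ℝ := (∫ ω, |f ω| ^ ζ ∂(ℙ : Measure Ω)) ^ (1/ζ) with hMdef
  have hM0 : 0 ≤ M :=
    Real.rpow_nonneg (integral_nonneg fun ω => Real.rpow_nonneg (abs_nonneg _) _) _
  -- Memℒp f ζ
  have hfLp : MemLp f (ENNReal.ofReal ζ) ℙ := by
    have hne0 : ENNReal.ofReal ζ ≠ 0 := by
      simp [ENNReal.ofReal_eq_zero, not_le, hζ0]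
    have hnetop : ENNReal.ofReal ζ ≠ ⊤ := ENNReal.ofReal_ne_top
    rw [← memLp_norm_rpow_iff hmf.aestronglyMeasurable hne0 hnetop]
    rw [ENNReal.div_self hne0 hnetop, ENNReal.toReal_ofReal hζ0.le,
      memLp_one_iff_integrable]
    simpa [Real.norm_eq_abs] using hmom
  -- the O constant
  obtain ⟨C, hC0, hC⟩ := hP.exists_nonneg
  rw [isBigO_iff]
  refine ⟨2 * M * C ^ (1 - 1/ζ), ?_⟩
  filter_upwards [Ioo_mem_nhdsGT (one_pos : (0:ℝ) < 1), hC.bound]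
    with p hp hCp
  obtain ⟨hp0, hp1⟩ := hp
  -- the conditioning set
  set s : Set Ω := {ω | 1 - p < F₂ (Y ω)} with hsdef
  have hms : MeasurableSet s := by
    have : s = g ⁻¹' Set.Ioi (1 - p) := rfl
    rw [this]; exact hmg measurableSet_Ioi
  have hPs : ℙ s = ENNReal.ofReal p := by
    have : s = g ⁻¹' Set.Ioi (1 - p) := rfl
    rw [this, ← Measure.map_apply hmg measurableSet_Ioi, huni,
      Measure.restrict_apply measurableSet_Ioi]
    have hset : Set.Ioi (1 - p) ∩ Set.Ioo (0:ℝ) 1 = Set.Ioo (1 - p) 1 := by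
      ext x
      constructor
      · rintro ⟨h1, _, h3⟩; exact ⟨h1, h3⟩
      · rintro ⟨h1, h2⟩
        exact ⟨h1, lt_of_le_of_lt (by linarith) h1, h2⟩
    rw [hset, Real.volume_Ioo]
    norm_num
  have hPs0 : ℙ s ≠ 0 := by
    rw [hPs]; simp [ENNReal.ofReal_eq_zero, not_le, hp0]
  set μ : Measure Ω := ℙ[|s] with hμdef
  have hμeq : μ = (ℙ s)⁻¹ • (ℙ : Measure Ω).restrict s := rfl
  have hμprob : IsProbabilityMeasure μ := cond_isProbabilityMeasure hPs0
  -- a.e. facts under μ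
  have hgae' : ∀ᵐ ω ∂μ, g ω ∈ Set.Ioo (0:ℝ) 1 :=
    (cond_absolutelyContinuous).ae_le hgae
  have hsae : ∀ᵐ ω ∂μ, 1 - p < g ω := by
    rw [ae_iff]
    have hset : {ω | ¬ 1 - p < g ω} = sᶜ := by
      ext ω; simp [hsdef, hgdef]
    rw [hset, hμdef, cond_apply hms, Set.inter_compl_self, measure_empty, mul_zero]
  have hgb : ∀ᵐ ω ∂μ, |g ω - 1| ≤ p := by
    filter_upwards [hgae', hsae] with ω h1 h2
    rw [abs_le]
    constructor <;> [linarith [h2]; linarith [h1.2]]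
  have hgb1 : ∀ᵐ ω ∂μ, ‖g ω‖ ≤ 1 := by
    filter_upwards [hgae'] with ω h1
    rw [Real.norm_eq_abs, abs_le]
    exact ⟨by linarith [h1.1], h1.2.le⟩
  -- integrability under μ
  have hinvne : (ℙ s)⁻¹ ≠ ⊤ := by
    rw [ENNReal.inv_ne_top]; exact hPs0
  have hf_intμ : Integrable f μ := by
    rw [hμeq]
    exact (hf_int.restrict).smul_measure hinvne
  have hg_intμ : Integrable g μ := by
    have h1 : Integrable (fun _ : Ω => (1:ℝ)) μ := integrable_const 1
    have := h1.bdd_mul (c := 1) hmg.aestronglyMeasurable hgb1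
    exact this.congr (ae_of_all _ fun ω => by simp)
  have hfg_intμ : Integrable (fun ω => f ω * g ω) μ := by
    have := hf_intμ.bdd_mul (c := 1) hmg.aestronglyMeasurable hgb1
    exact this.congr (ae_of_all _ fun ω => mul_comm _ _)
  -- integral formula under μ
  have hint_formula : ∀ (h : Ω → ℝ), ∫ ω, h ω ∂μ = p⁻¹ * ∫ ω in s, h ω ∂ℙ := by
    intro h
    rw [hμeq, integral_smul_measure, ENNReal.toReal_inv, hPs,
      ENNReal.toReal_ofReal hp0.le, smul_eq_mul]
  -- notation
  set N : ℝ := ∫ ω, |f ω| ∂μ with hNdef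
  have hN0 : 0 ≤ N := integral_nonneg fun ω => abs_nonneg _
  -- core bound: |cov| ≤ 2 p N
  have hcov : |(∫ ω, f ω * g ω ∂μ) - (∫ ω, f ω ∂μ) * (∫ ω, g ω ∂μ)| ≤ 2 * p * N := by
    have hsplit : (∫ ω, f ω * g ω ∂μ) - (∫ ω, f ω ∂μ) * (∫ ω, g ω ∂μ)
        = (∫ ω, f ω * (g ω - 1) ∂μ) - (∫ ω, f ω ∂μ) * ((∫ ω, g ω ∂μ) - 1) := by
      have h1 : ∫ ω, f ω * (g ω - 1) ∂μ = (∫ ω, f ω * g ω ∂μ) - ∫ ω, f ω ∂μ := by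
        rw [← integral_sub hfg_intμ hf_intμ]
        congr 1; ext ω; ring
      rw [h1]; ring
    rw [hsplit]
    have hb1 : |∫ ω, f ω * (g ω - 1) ∂μ| ≤ p * N := by
      have hint1 : Integrable (fun ω => f ω * (g ω - 1)) μ := by
        have := (hfg_intμ.sub hf_intμ)
        exact this.congr (ae_of_all _ fun ω => by simp only [Pi.sub_apply]; ring)
      calc |∫ ω, f ω * (g ω - 1) ∂μ| ≤ ∫ ω, |f ω * (g ω - 1)| ∂μ := by
            have := norm_integral_le_integral_norm (μ := μ) (fun ω => f ω * (g ω - 1))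
            simp only [Real.norm_eq_abs] at this
            exact this
        _ ≤ ∫ ω, p * |f ω| ∂μ := by
            refine integral_mono_ae hint1.abs (hf_intμ.abs.const_mul p) ?_
            filter_upwards [hgb] with ω hω
            rw [abs_mul]
            calc |f ω| * |g ω - 1| ≤ |f ω| * p :=
                  mul_le_mul_of_nonneg_left hω (abs_nonneg _)
              _ = p * |f ω| := mul_comm _ _
        _ = p * N := by rw [integral_const_mul]
    have hb2 : |(∫ ω, g ω ∂μ) - 1| ≤ p := by
      have h1 : (∫ ω, g ω ∂μ) - 1 = ∫ ω, g ω - 1 ∂μ := by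
        rw [integral_sub hg_intμ (integrable_const 1), integral_const]
        simp
      rw [h1]
      calc |∫ ω, g ω - 1 ∂μ| ≤ ∫ ω, |g ω - 1| ∂μ := by
            have := norm_integral_le_integral_norm (μ := μ) (fun ω => g ω - 1)
            simp only [Real.norm_eq_abs] at this
            exact this
        _ ≤ ∫ _ω, p ∂μ := by
            refine integral_mono_ae ((hg_intμ.sub (integrable_const 1)).abs)
              (integrable_const p) hgb
        _ = p := by simp
    have hb3 : |∫ ω, f ω ∂μ| ≤ N := by
      have := norm_integral_le_integral_norm (μ := μ) f
      simp only [Real.norm_eq_abs] at this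
      exact this
    calc |(∫ ω, f ω * (g ω - 1) ∂μ) - (∫ ω, f ω ∂μ) * ((∫ ω, g ω ∂μ) - 1)|
        ≤ |∫ ω, f ω * (g ω - 1) ∂μ| + |(∫ ω, f ω ∂μ) * ((∫ ω, g ω ∂μ) - 1)| :=
          abs_sub _ _
      _ ≤ p * N + N * p := by
          refine add_le_add hb1 ?_
          rw [abs_mul]
          exact mul_le_mul hb3 hb2 (abs_nonneg _) hN0
      _ = 2 * p * N := by ring
  -- 2 p N = 2 ∫_s |f|
  have hpN : 2 * p * N = 2 * ∫ ω in s, |f ω| ∂ℙ := by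
    rw [hNdef, hint_formula]
    field_simp
  -- Hölder
  set B : Set Ω := {ω | X ω < 0} ∩ s with hBdef
  have hmB : MeasurableSet B :=
    (measurableSet_lt hmX measurable_const).inter hms
  have hBeq : B = {ω | X ω < 0 ∧ 1 - F₂ (Y ω) < p} := by
    ext ω
    simp only [hBdef, Set.mem_inter_iff, Set.mem_setOf_eq, hsdef]
    constructor
    · rintro ⟨h1, h2⟩; exact ⟨h1, by linarith⟩
    · rintro ⟨h1, h2⟩; exact ⟨h1, by linarith⟩
  have hholder : ∫ ω in s, |f ω| ∂ℙ ≤ M * (ℙ B).toReal ^ (1 - 1/ζ) := by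
    have hind : ∫ ω in s, |f ω| ∂ℙ
        = ∫ ω, |f ω| * B.indicator (fun _ => (1:ℝ)) ω ∂ℙ := by
      rw [← integral_indicator hms]
      congr 1
      ext ω
      by_cases hX : X ω < 0
      · by_cases hωs : ω ∈ s
        · rw [Set.indicator_of_mem hωs, Set.indicator_of_mem (show ω ∈ B from ⟨hX, hωs⟩), mul_one]
        · rw [Set.indicator_of_notMem hωs,
            Set.indicator_of_notMem (fun h => hωs h.2), mul_zero]
      · have hf0 : f ω = 0 := by
          simp only [hfdef]; rw [min_eq_right (not_lt.mp hX)]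
        by_cases hωs : ω ∈ s
        · rw [Set.indicator_of_mem hωs, hf0]; simp
        · rw [Set.indicator_of_notMem hωs, hf0]; simp
    rw [hind]
    have hIndLp : MemLp (B.indicator (fun _ => (1:ℝ)))
        (ENNReal.ofReal (ζ / (ζ - 1))) ℙ :=
      (memLp_const (1:ℝ)).indicator hmB
    have h := integral_mul_le_Lp_mul_Lq_of_nonneg (μ := (ℙ : Measure Ω)) hconj
      (f := fun ω => |f ω|) (g := B.indicator (fun _ => (1:ℝ)))
      (ae_of_all _ fun ω => abs_nonneg _)
      (ae_of_all _ fun ω => Set.indicator_nonneg (fun _ _ => one_pos.le) _)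
      (by simpa [Real.norm_eq_abs] using
        (memLp_norm_iff hmf.aestronglyMeasurable).mpr hfLp)
      hIndLp
    refine h.trans ?_
    have hpow : (fun ω => (B.indicator (fun _ => (1:ℝ)) ω) ^ (ζ / (ζ - 1)))
        = B.indicator (fun _ => (1:ℝ)) := by
      ext ω
      by_cases hω : ω ∈ B
      · simp [Set.indicator_of_mem hω]
      · simp [Set.indicator_of_notMem hω, Real.zero_rpow hconj.symm.ne_zero]
    rw [hpow, integral_indicator_const _ hmB, hq]
    simp only [smul_eq_mul, mul_one]
    exact le_of_eq rfl
  -- assemble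
  have hPB : (ℙ B).toReal ≤ C * p ^ α := by
    rw [hBeq]
    have h1 : ‖p ^ α‖ = p ^ α := by
      rw [Real.norm_eq_abs, abs_of_nonneg (Real.rpow_nonneg hp0.le _)]
    have h2 := hCp
    rw [Real.norm_eq_abs, abs_of_nonneg ENNReal.toReal_nonneg, h1] at h2
    exact h2
  have hPB' : (ℙ B).toReal ^ (1 - 1/ζ) ≤ C ^ (1 - 1/ζ) * p ^ (α * (1 - 1/ζ)) := by
    calc (ℙ B).toReal ^ (1 - 1/ζ) ≤ (C * p ^ α) ^ (1 - 1/ζ) :=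
          Real.rpow_le_rpow ENNReal.toReal_nonneg hPB hexp_nonneg
      _ = C ^ (1 - 1/ζ) * p ^ (α * (1 - 1/ζ)) := by
          rw [Real.mul_rpow hC0 (Real.rpow_nonneg hp0.le _),
            Real.rpow_mul hp0.le]
  have hplast : p ^ (α * (1 - 1/ζ)) ≤ p ^ (α * (1 - 1/ζ) - 1) :=
    Real.rpow_le_rpow_of_exponent_ge hp0 hp1.le (by linarith)
  have hnormtarget : ‖p ^ (α * (1 - 1/ζ) - 1)‖ = p ^ (α * (1 - 1/ζ) - 1) := by
    rw [Real.norm_eq_abs, abs_of_nonneg (Real.rpow_nonneg hp0.le _)]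
  rw [Real.norm_eq_abs, hnormtarget]
  calc |(∫ ω, f ω * g ω ∂μ) - (∫ ω, f ω ∂μ) * (∫ ω, g ω ∂μ)|
      ≤ 2 * p * N := hcov
    _ = 2 * ∫ ω in s, |f ω| ∂ℙ := hpN
    _ ≤ 2 * (M * (ℙ B).toReal ^ (1 - 1/ζ)) := by linarith [hholder]
    _ ≤ 2 * (M * (C ^ (1 - 1/ζ) * p ^ (α * (1 - 1/ζ)))) := by
        have := mul_le_mul_of_nonneg_left hPB' hM0
        linarith
    _ ≤ 2 * (M * (C ^ (1 - 1/ζ) * p ^ (α * (1 - 1/ζ) - 1))) := by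
        have h1 : (0:ℝ) ≤ C ^ (1 - 1/ζ) := Real.rpow_nonneg hC0 _
        have := mul_le_mul_of_nonneg_left hplast h1
        have := mul_le_mul_of_nonneg_left this hM0
        linarith
    _ = 2 * M * C ^ (1 - 1/ζ) * p ^ (α * (1 - 1/ζ) - 1) := by ring
end
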